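/- Let X be a geodesic metric space in which every geodesic triangle is δ-slim, let g be a surjective isometry of X, and let α ∈ X be a point such that for every geodesic segment σ from g^{-1}(α) to g(α) the distance from α to σ is at most 2δ. Then the asymptotic translation length of g satisfies |g| ≥ d(α, g(α)) − 8δ. -/

import Mathlib

open Filter Topology

/-- A geodesic segment in a metric space: the image of an isometric embedding of the
real interval `[0, dist x y]` sending the endpoints to `x` and `y`. -/
def IsGeodesicSegment {X : Type*} [MetricSpace X] (s : Set X) (x y : X) : Prop :=
  ∃ f : ℝ → X, f 0 = x ∧ f (dist x y) = y ∧
    (∀ a ∈ Set.Icc 0 (dist x y), ∀ b ∈ Set.Icc 0 (dist x y), dist (f a) (f b) = |a - b|) ∧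
    s = f '' Set.Icc 0 (dist x y)

/-- A geodesic metric space: any two points are joined by a geodesic segment. -/
def GeodesicSpace (X : Type*) [MetricSpace X] : Prop :=
  ∀ x y : X, ∃ s : Set X, IsGeodesicSegment s x y

/-- Geodesic triangles are `δ`-slim: each side is contained in the closed
`δ`-neighbourhood of the union of the other two sides. -/
def SlimTriangles (X : Type*) [MetricSpace X] (δ : ℝ) : Prop :=
  ∀ x y z : X, ∀ sxy syz szx : Set X,
    IsGeodesicSegment sxy x y → IsGeodesicSegment syz y z → IsGeodesicSegment szx z x →
    ∀ p ∈ sxy, Metric.infDist p (syz ∪ szx) ≤ δ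

/-!
Write `xₙ = gⁿ α` and `d = dist α (g α)`. Conjugating by `gⁿ⁺¹`, the hypothesis on `α` says that
`xₙ₊₁` lies within `2δ` of every geodesic `[xₙ, xₙ₊₂]`. Slimness of the triangle
`(xₙ, xₙ₊₂, x₀)` then puts `xₙ₊₁` within `3δ` of `[xₙ₊₂, x₀]` or of `[x₀, xₙ]`, so passing through
`xₙ₊₁` costs at most `6δ` on one of these sides. As long as `d > 6δ`, the second alternative
contradicts the growth already established, and induction gives
`dist x₀ xₙ ≥ n (d - 6δ)`, hence `|g| ≥ d - 6δ`.
-/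

open Metric

section

variable {X Y : Type*} [MetricSpace X] [MetricSpace Y]

namespace IsGeodesicSegment

variable {s : Set X} {x y : X}

theorem image {f : X → Y} (hf : Isometry f) (h : IsGeodesicSegment s x y) :
    IsGeodesicSegment (f '' s) (f x) (f y) := by
  obtain ⟨γ, h0, h1, hγ, rfl⟩ := h
  refine ⟨f ∘ γ, ?_⟩
  rw [hf.dist_eq]
  exact ⟨by simp [h0], by simp [h1], fun a ha b hb => by simp [hf.dist_eq, hγ a ha b hb],
    (Set.image_comp f γ _).symm⟩

theorem isCompact (h : IsGeodesicSegment s x y) : IsCompact s := by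
  obtain ⟨γ, -, -, hγ, rfl⟩ := h
  have : LipschitzOnWith 1 γ (Set.Icc 0 (dist x y)) :=
    LipschitzOnWith.of_dist_le_mul fun a ha b hb => by simp [hγ a ha b hb, Real.dist_eq]
  exact isCompact_Icc.image_of_continuousOn this.continuousOn

theorem nonempty (h : IsGeodesicSegment s x y) : s.Nonempty := by
  obtain ⟨γ, -, -, -, rfl⟩ := h
  exact (Set.nonempty_Icc.2 dist_nonneg).image γ

theorem dist_add_dist {q : X} (h : IsGeodesicSegment s x y) (hq : q ∈ s) :
    dist x q + dist q y = dist x y := by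
  obtain ⟨γ, h0, h1, hγ, rfl⟩ := h
  obtain ⟨t, ht, rfl⟩ := hq
  have hD : dist x y ∈ Set.Icc 0 (dist x y) := Set.right_mem_Icc.2 dist_nonneg
  have h0' : (0 : ℝ) ∈ Set.Icc 0 (dist x y) := Set.left_mem_Icc.2 dist_nonneg
  rw [← h0, ← h1, hγ 0 h0' t ht, hγ t ht _ hD, h0, h1, abs_of_nonpos (by linarith [ht.1]),
    abs_of_nonpos (by linarith [ht.2])]
  ring

end IsGeodesicSegment

theorem isGeodesicSegment_singleton (x : X) : IsGeodesicSegment {x} x x :=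
  ⟨fun _ => x, rfl, rfl, fun a ha b hb => by simp_all, by simp⟩

theorem SlimTriangles.nonneg {δ : ℝ} (h : SlimTriangles X δ) (x : X) : 0 ≤ δ :=
  infDist_nonneg.trans <| h x x x {x} {x} {x} (isGeodesicSegment_singleton x)
    (isGeodesicSegment_singleton x) (isGeodesicSegment_singleton x) x rfl

theorem SlimTriangles.exists_dist_le {δ : ℝ} (h : SlimTriangles X δ) {x y z p : X}
    {sxy syz szx : Set X} (hxy : IsGeodesicSegment sxy x y) (hyz : IsGeodesicSegment syz y z)
    (hzx : IsGeodesicSegment szx z x) (hp : p ∈ sxy) : ∃ q ∈ syz ∪ szx, dist p q ≤ δ := by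
  obtain ⟨q, hq, hpq⟩ := (hyz.isCompact.union hzx.isCompact).exists_infDist_eq_dist
    (hyz.nonempty.mono Set.subset_union_left) p
  exact ⟨q, hq, hpq ▸ h x y z sxy syz szx hxy hyz hzx p hp⟩

def LiesNearGeodesics (ε : ℝ) (p a b : X) : Prop :=
  ∀ σ : Set X, IsGeodesicSegment σ a b → infDist p σ ≤ ε

namespace LiesNearGeodesics

variable {ε : ℝ} {p a b : X}

theorem map (e : X ≃ᵢ Y) (h : LiesNearGeodesics ε p a b) :
    LiesNearGeodesics ε (e p) (e a) (e b) := by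
  intro τ hτ
  have hσ := hτ.image e.symm.isometry
  rw [e.symm_apply_apply, e.symm_apply_apply] at hσ
  calc infDist (e p) τ = infDist (e p) (e '' (e.symm '' τ)) := by
        rw [← Set.image_comp, e.self_comp_symm, Set.image_id]
    _ = infDist p (e.symm '' τ) := infDist_image e.isometry
    _ ≤ ε := h _ hσ

theorem exists_dist_le (h : LiesNearGeodesics ε p a b) {σ : Set X}
    (hσ : IsGeodesicSegment σ a b) : ∃ q ∈ σ, dist p q ≤ ε := by
  obtain ⟨q, hq, hpq⟩ := hσ.isCompact.exists_infDist_eq_dist hσ.nonempty p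
  exact ⟨q, hq, hpq ▸ h σ hσ⟩

theorem nonneg (hgeo : GeodesicSpace X) (h : LiesNearGeodesics ε p a b) : 0 ≤ ε := by
  obtain ⟨σ, hσ⟩ := hgeo a b
  exact infDist_nonneg.trans (h σ hσ)

end LiesNearGeodesics

theorem Equiv.Perm.isometry_pow {g : Equiv.Perm X} (hg : Isometry g) (n : ℕ) :
    Isometry ⇑(g ^ n) := by
  induction n with
  | zero => exact isometry_id
  | succ n ih => rw [pow_succ, Equiv.Perm.coe_mul]; exact ih.comp hg

variable {δ ε : ℝ}

theorem LiesNearGeodesics.dist_add_dist_le_or (hgeo : GeodesicSpace X) (hslim : SlimTriangles X δ)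
    {a b c : X} (h : LiesNearGeodesics ε b a c) (o : X) :
    dist o b + dist b c - 2 * (ε + δ) ≤ dist o c ∨
      dist o b + dist a b - 2 * (ε + δ) ≤ dist o a := by
  obtain ⟨τ, hτ⟩ := hgeo a c
  obtain ⟨γ, hγ⟩ := hgeo c o
  obtain ⟨ρ, hρ⟩ := hgeo o a
  obtain ⟨p, hpτ, hbp⟩ := h.exists_dist_le hτ
  obtain ⟨q, hq, hpq⟩ := hslim.exists_dist_le hτ hγ hρ hpτ
  have hbq : dist b q ≤ ε + δ := (dist_triangle b p q).trans (add_le_add hbp hpq)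
  have hob := dist_triangle o q b
  rcases hq with hqγ | hqρ
  · have hcqo := hγ.dist_add_dist hqγ
    have hbc := dist_triangle b q c
    left; linarith [dist_comm q b, dist_comm o q, dist_comm q c, dist_comm c o]
  · have hoqa := hρ.dist_add_dist hqρ
    have hab := dist_triangle a q b
    right; linarith [dist_comm q b, dist_comm a q]

section Orbit

variable {d : ℝ} {x : ℕ → X} (hgeo : GeodesicSpace X) (hslim : SlimTriangles X δ)
  (hd : ∀ n, dist (x n) (x (n + 1)) = d)
  (hnear : ∀ n, LiesNearGeodesics ε (x (n + 1)) (x n) (x (n + 2)))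
include hgeo hslim hd hnear

theorem dist_add_le_dist_succ (hgap : 2 * (ε + δ) < d) (n : ℕ) :
    dist (x 0) (x n) + d - 2 * (ε + δ) ≤ dist (x 0) (x (n + 1)) := by
  induction n with
  | zero =>
    have hε := (hnear 0).nonneg hgeo
    have hδ := hslim.nonneg (x 0)
    rw [dist_self, zero_add, hd 0]; linarith
  | succ n ih =>
    rcases (hnear n).dist_add_dist_le_or hgeo hslim (x 0) with hnext | hprev
    · rwa [hd (n + 1)] at hnext
    · rw [hd n] at hprev; linarith

theorem natCast_mul_le_dist (n : ℕ) : n * (d - 2 * (ε + δ)) ≤ dist (x 0) (x n) := by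
  rcases le_or_gt d (2 * (ε + δ)) with hsmall | hgap
  · exact (mul_nonpos_of_nonneg_of_nonpos n.cast_nonneg (by linarith)).trans dist_nonneg
  induction n with
  | zero => simp
  | succ n ih =>
    have := dist_add_le_dist_succ hgeo hslim hd hnear hgap n
    push_cast; linarith

end Orbit

theorem le_of_tendsto_div_of_forall_mul_le {u : ℕ → ℝ} {c L : ℝ}
    (hu : Tendsto (fun n : ℕ => u n / n) atTop (𝓝 L)) (h : ∀ n : ℕ, n * c ≤ u n) : c ≤ L := by
  refine ge_of_tendsto hu ?_
  filter_upwards [eventually_ge_atTop 1] with n hn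
  rw [le_div_iff₀ (by exact_mod_cast hn), mul_comm]
  exact h n

end

/-- In a geodesic space with `δ`-slim triangles, if `g` is a surjective isometry and
`α` a point lying within `2δ` of every geodesic from `g⁻¹ α` to `g α`, then the
asymptotic translation length of `g` is at least `dist α (g α) - 8δ`. -/
theorem translation_length_lower_bound
    {X : Type*} [MetricSpace X] (δ : ℝ)
    (hgeo : GeodesicSpace X) (hslim : SlimTriangles X δ)
    (g : Equiv.Perm X) (hg : Isometry g)
    (α : X)
    (hα : ∀ σ : Set X, IsGeodesicSegment σ (g⁻¹ α) (g α) → Metric.infDist α σ ≤ 2 * δ)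
    (L : ℝ)
    (hL : ∀ x : X, Tendsto (fun n : ℕ => dist x ((g ^ n) x) / n) atTop (𝓝 L)) :
    dist α (g α) - 8 * δ ≤ L := by
  have hd : ∀ n : ℕ, dist ((g ^ n) α) ((g ^ (n + 1)) α) = dist α (g α) := fun n => by
    rw [pow_succ, Equiv.Perm.mul_apply, (Equiv.Perm.isometry_pow hg n).dist_eq]
  have hnear : ∀ n : ℕ,
      LiesNearGeodesics (2 * δ) ((g ^ (n + 1)) α) ((g ^ n) α) ((g ^ (n + 2)) α) := fun n => by
    have := LiesNearGeodesics.map ⟨g ^ (n + 1), Equiv.Perm.isometry_pow hg (n + 1)⟩ hα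
    simpa [pow_succ] using this
  have hL' := le_of_tendsto_div_of_forall_mul_le (hL α)
    (natCast_mul_le_dist (x := fun n => (g ^ n) α) hgeo hslim hd hnear)
  linarith [hslim.nonneg α]
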